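/- arXiv:1811.06215 — 5 statements merged into one kernel-verified Lean document; each statement's English description precedes it below -/
import Mathlib

section
/- Let r₁, r₂, a, K, γ, d₁, d₂, l > 0 be real numbers, m ∈ [0,1), n ∈ ℕ, and set u* = K r₁/(r₁ + a K γ (1−m)²), Aₙ = (d₁ + d₂)n²/l² + (r₁/K)u* + r₂ and Bₙ = d₁d₂n⁴/l⁴ + (r₁/K)u*d₂n²/l² + r₂d₁n²/l² + a(1−m)²γr₂u* + (r₁/K)u*r₂. Then Aₙ > 0, Bₙ > 0, and every complex number λ satisfying λ² + Aₙλ + Bₙ = 0 has Re λ < 0. (Hence at τ₁ = τ₂ = 0 every root of the characteristic equation of each spatial mode n lies in the open left half-plane, so the positive equilibrium is locally asymptotically stable.) -/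
/-! For a monic real quadratic with positive coefficients, a non-real root has real part
`-p / 2` (half the sum of the conjugate pair of roots), while a real root `x ≥ 0` would make
`x² + p x + q` positive. With `τ₁ = τ₂ = 0` the coefficients `Aₙ`, `Bₙ` are sums of
nonnegative terms and one positive one, since `u* > 0`. -/

theorem Complex.re_neg_of_sq_add_mul_add_eq_zero {p q : ℝ} (hp : 0 < p) (hq : 0 < q) {z : ℂ}
    (hz : z ^ 2 + p * z + q = 0) : z.re < 0 := by
  have hre : z.re ^ 2 - z.im ^ 2 + p * z.re + q = 0 := by
    simpa [sq] using congrArg Complex.re hz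
  have him : z.im * (2 * z.re + p) = 0 := by
    have := congrArg Complex.im hz
    simp only [sq, Complex.add_im, Complex.mul_im, Complex.ofReal_re, Complex.ofReal_im,
      Complex.zero_im] at this
    linarith
  rcases mul_eq_zero.mp him with hreal | hsum
  · rw [hreal] at hre
    by_contra! hx
    nlinarith
  · linarith

theorem stmt_0_general
    (r₁ r₂ a K γ d₁ d₂ l : ℝ) (m : ℝ) (n : ℕ)
    (hr₁ : 0 < r₁) (hr₂ : 0 < r₂) (ha : 0 < a) (hK : 0 < K) (hγ : 0 < γ)
    (hd₁ : 0 < d₁) (hd₂ : 0 < d₂)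
    (ustar : ℝ) (hustar : ustar = K * r₁ / (r₁ + a * K * γ * (1 - m) ^ 2))
    (A B : ℝ)
    (hA : A = (d₁ + d₂) * n ^ 2 / l ^ 2 + (r₁ / K) * ustar + r₂)
    (hB : B = d₁ * d₂ * n ^ 4 / l ^ 4 + (r₁ / K) * ustar * d₂ * n ^ 2 / l ^ 2
        + r₂ * d₁ * n ^ 2 / l ^ 2 + a * (1 - m) ^ 2 * γ * r₂ * ustar
        + (r₁ / K) * ustar * r₂) :
    0 < A ∧ 0 < B ∧
      ∀ lam : ℂ, lam ^ 2 + (A : ℂ) * lam + (B : ℂ) = 0 → lam.re < 0 := by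
  have hustar_pos : 0 < ustar := by rw [hustar]; positivity
  have hA_pos : 0 < A := by rw [hA]; positivity
  have hB_pos : 0 < B := by rw [hB]; positivity
  exact ⟨hA_pos, hB_pos, fun _ => Complex.re_neg_of_sq_add_mul_add_eq_zero hA_pos hB_pos⟩

theorem stmt_0
    (r₁ r₂ a K γ d₁ d₂ l : ℝ) (m : ℝ) (n : ℕ)
    (hr₁ : 0 < r₁) (hr₂ : 0 < r₂) (ha : 0 < a) (hK : 0 < K) (hγ : 0 < γ)
    (hd₁ : 0 < d₁) (hd₂ : 0 < d₂) (hl : 0 < l)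
    (hm0 : 0 ≤ m) (hm1 : m < 1)
    (ustar : ℝ) (hustar : ustar = K * r₁ / (r₁ + a * K * γ * (1 - m) ^ 2))
    (A B : ℝ)
    (hA : A = (d₁ + d₂) * n ^ 2 / l ^ 2 + (r₁ / K) * ustar + r₂)
    (hB : B = d₁ * d₂ * n ^ 4 / l ^ 4 + (r₁ / K) * ustar * d₂ * n ^ 2 / l ^ 2
        + r₂ * d₁ * n ^ 2 / l ^ 2 + a * (1 - m) ^ 2 * γ * r₂ * ustar
        + (r₁ / K) * ustar * r₂) :
    0 < A ∧ 0 < B ∧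
      ∀ lam : ℂ, lam ^ 2 + (A : ℂ) * lam + (B : ℂ) = 0 → lam.re < 0 :=
  stmt_0_general r₁ r₂ a K γ d₁ d₂ l m n hr₁ hr₂ ha hK hγ hd₁ hd₂ ustar hustar A B hA hB
end

section
/- For all complex numbers p₀, p₁, p₂, p₃, one has (|p₀|² + |p₁|² − |p₂|² − |p₃|²)² − 4|p₂·conj(p₃) − p₀·conj(p₁)|² = (|p₀|² − |p₁|² + |p₂|² − |p₃|²)² − 4|p₁·conj(p₃) − p₀·conj(p₂)|². Consequently (|p₀|² + |p₁|² − |p₂|² − |p₃|²)² ≤ 4|p₂·conj(p₃) − p₀·conj(p₁)|² holds if and only if (|p₀|² − |p₁|² + |p₂|² − |p₃|²)² ≤ 4|p₁·conj(p₃) − p₀·conj(p₂)|² holds. -/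
/-!
Expanding `‖z - w‖² = ‖z‖² + ‖w‖² - 2 Re (z w̄)`, both squared norms `‖p₂ p̄₃ - p₀ p̄₁‖²` and
`‖p₁ p̄₃ - p₀ p̄₂‖²` have the same cross term `2 Re (p̄₀ p₁ p₂ p̄₃)`, so their difference is
`(‖p₀‖² - ‖p₃‖²)(‖p₁‖² - ‖p₂‖²)`. The difference of the two squared brackets is four times the same
product, which gives the identity; the equivalence follows since both inequalities compare a
quantity with `0` after moving everything to one side.
-/

open ComplexConjugate

lemma norm_mul_conj_sub_sq_sub_norm_mul_conj_sub_sq (p₀ p₁ p₂ p₃ : ℂ) :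
    ‖p₂ * conj p₃ - p₀ * conj p₁‖ ^ 2 - ‖p₁ * conj p₃ - p₀ * conj p₂‖ ^ 2
      = (‖p₀‖ ^ 2 - ‖p₃‖ ^ 2) * (‖p₁‖ ^ 2 - ‖p₂‖ ^ 2) := by
  have cross : p₂ * conj p₃ * conj (p₀ * conj p₁) = p₁ * conj p₃ * conj (p₀ * conj p₂) := by
    simp only [map_mul, Complex.conj_conj]
    ring
  simp only [Complex.sq_norm, Complex.normSq_sub, cross, Complex.normSq_mul, Complex.normSq_conj]
  ring

theorem stmt_5 (p₀ p₁ p₂ p₃ : ℂ) :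
    ((‖p₀‖ ^ 2 + ‖p₁‖ ^ 2
        - ‖p₂‖ ^ 2 - ‖p₃‖ ^ 2) ^ 2
      - 4 * ‖(p₂ * (starRingEnd ℂ) p₃ - p₀ * (starRingEnd ℂ) p₁)‖ ^ 2
      = (‖p₀‖ ^ 2 - ‖p₁‖ ^ 2
          + ‖p₂‖ ^ 2 - ‖p₃‖ ^ 2) ^ 2
        - 4 * ‖(p₁ * (starRingEnd ℂ) p₃ - p₀ * (starRingEnd ℂ) p₂)‖ ^ 2) ∧
    ((‖p₀‖ ^ 2 + ‖p₁‖ ^ 2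
        - ‖p₂‖ ^ 2 - ‖p₃‖ ^ 2) ^ 2
        ≤ 4 * ‖(p₂ * (starRingEnd ℂ) p₃ - p₀ * (starRingEnd ℂ) p₁)‖ ^ 2
      ↔ (‖p₀‖ ^ 2 - ‖p₁‖ ^ 2
          + ‖p₂‖ ^ 2 - ‖p₃‖ ^ 2) ^ 2
        ≤ 4 * ‖(p₁ * (starRingEnd ℂ) p₃ - p₀ * (starRingEnd ℂ) p₂)‖ ^ 2) := by
  have identity := norm_mul_conj_sub_sq_sub_norm_mul_conj_sub_sq p₀ p₁ p₂ p₃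
  have key : (‖p₀‖ ^ 2 + ‖p₁‖ ^ 2 - ‖p₂‖ ^ 2 - ‖p₃‖ ^ 2) ^ 2
      - 4 * ‖p₂ * conj p₃ - p₀ * conj p₁‖ ^ 2
      = (‖p₀‖ ^ 2 - ‖p₁‖ ^ 2 + ‖p₂‖ ^ 2 - ‖p₃‖ ^ 2) ^ 2
        - 4 * ‖p₁ * conj p₃ - p₀ * conj p₂‖ ^ 2 := by
    linear_combination (-4 : ℝ) * identity
  exact ⟨key, by rw [← sub_nonpos, key, sub_nonpos]⟩
end

section
/- Let p₀, p₁, p₂, p₃ ∈ ℂ and ω > 0. There exist real numbers τ₁ ≥ 0 and τ₂ ≥ 0 such that p₀ + p₁e^{−iωτ₁} + p₂e^{−iωτ₂} + p₃e^{−iω(τ₁+τ₂)} = 0 if and only if (|p₀|² + |p₁|² − |p₂|² − |p₃|²)² ≤ 4|p₂·conj(p₃) − p₀·conj(p₁)|². -/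
/-! Put `w = e^{-iωτ₁}` and `v = e^{-iωτ₂}`; since `ω > 0`, each ranges over the whole
unit circle as its delay ranges over `[0, ∞)`. The equation reads
`(p₀ + p₁ w) + v (p₂ + p₃ w) = 0`, which is solvable in `v` exactly when
`|p₀ + p₁ w| = |p₂ + p₃ w|`. Expanding, `|p₀ + p₁ w|² - |p₂ + p₃ w|² = A - 2 Re(B w̄)` with
`A = |p₀|² + |p₁|² - |p₂|² - |p₃|²` and `B = p₂ p̄₃ - p₀ p̄₁`, and as `w` runs over the circle
`Re(B w̄)` runs over `[-|B|, |B|]`; so a crossing exists iff `|A| ≤ 2|B|`. -/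

open Complex ComplexConjugate

theorem exists_nonneg_exp_neg_I_mul_eq_iff {ω : ℝ} (hω : 0 < ω) (z : ℂ) :
    (∃ τ : ℝ, 0 ≤ τ ∧ exp (-(I * ω * τ)) = z) ↔ ‖z‖ = 1 := by
  constructor
  · rintro ⟨τ, -, rfl⟩
    rw [norm_exp]
    simp
  · intro hz
    -- `2π - arg z ∈ [π, 3π)` is a nonnegative angle with the same exponential as `arg z`.
    refine ⟨(2 * Real.pi - z.arg) / ω,
      div_nonneg (by linarith [arg_le_pi z, Real.pi_pos]) hω.le, ?_⟩
    have hω' : (ω : ℂ) ≠ 0 := ofReal_ne_zero.mpr hω.ne'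
    have hangle : -(I * ω * (((2 * Real.pi - z.arg) / ω : ℝ) : ℂ))
        = z.arg * I - 2 * Real.pi * I := by
      push_cast
      field_simp
      ring
    rw [hangle, exp_sub, exp_two_pi_mul_I, div_one]
    simpa [hz] using norm_mul_exp_arg_mul_I z

theorem exists_norm_eq_one_add_mul_eq_zero_iff (a b : ℂ) :
    (∃ v : ℂ, ‖v‖ = 1 ∧ a + v * b = 0) ↔ ‖a‖ = ‖b‖ := by
  constructor
  · rintro ⟨v, hv, h⟩
    rw [eq_neg_of_add_eq_zero_left h, norm_neg, norm_mul, hv, one_mul]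
  · intro hab
    by_cases hb : b = 0
    · subst hb
      exact ⟨1, norm_one, by simpa using hab⟩
    · refine ⟨-a / b, ?_, by rw [div_mul_cancel₀ _ hb, add_neg_cancel]⟩
      rw [norm_div, norm_neg, hab, div_self (norm_ne_zero_iff.mpr hb)]

theorem exists_norm_eq_one_re_mul_eq_iff (B : ℂ) (r : ℝ) :
    (∃ u : ℂ, ‖u‖ = 1 ∧ (B * u).re = r) ↔ |r| ≤ ‖B‖ := by
  constructor
  · rintro ⟨u, hu, rfl⟩
    simpa [hu] using abs_re_le_norm (B * u)
  · intro h
    by_cases hB : B = 0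
    · subst hB
      exact ⟨1, norm_one, by simpa using (abs_nonpos_iff.mp (by simpa using h)).symm⟩
    · have ht : (√(‖B‖ ^ 2 - r ^ 2)) ^ 2 = ‖B‖ ^ 2 - r ^ 2 :=
        Real.sq_sqrt (by nlinarith [abs_nonneg r, sq_abs r])
      refine ⟨(r + √(‖B‖ ^ 2 - r ^ 2) * I) / B, ?_, by simp [mul_div_cancel₀ _ hB]⟩
      rw [norm_div, norm_add_mul_I, ht, add_sub_cancel, Real.sqrt_sq (norm_nonneg B),
        div_self (norm_ne_zero_iff.mpr hB)]

theorem sq_norm_add_mul_sub_sq_norm_add_mul (p₀ p₁ p₂ p₃ : ℂ) {w : ℂ} (hw : ‖w‖ = 1) :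
    ‖p₀ + p₁ * w‖ ^ 2 - ‖p₂ + p₃ * w‖ ^ 2
      = (‖p₀‖ ^ 2 + ‖p₁‖ ^ 2 - ‖p₂‖ ^ 2 - ‖p₃‖ ^ 2)
        - 2 * ((p₂ * conj p₃ - p₀ * conj p₁) * conj w).re := by
  have hw' : normSq w = 1 := by rw [← Complex.sq_norm, hw, one_pow]
  simp only [Complex.sq_norm, normSq_add, hw', mul_one, map_mul, sub_mul, sub_re, mul_assoc]
  ring

theorem exists_norm_eq_one_norm_add_mul_eq_iff (p₀ p₁ p₂ p₃ : ℂ) :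
    (∃ w : ℂ, ‖w‖ = 1 ∧ ‖p₀ + p₁ * w‖ = ‖p₂ + p₃ * w‖)
      ↔ (‖p₀‖ ^ 2 + ‖p₁‖ ^ 2 - ‖p₂‖ ^ 2 - ‖p₃‖ ^ 2) ^ 2
        ≤ 4 * ‖p₂ * conj p₃ - p₀ * conj p₁‖ ^ 2 := by
  set A := ‖p₀‖ ^ 2 + ‖p₁‖ ^ 2 - ‖p₂‖ ^ 2 - ‖p₃‖ ^ 2
  set B := p₂ * conj p₃ - p₀ * conj p₁
  have hnorms : ∀ w : ℂ, ‖w‖ = 1 →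
      (‖p₀ + p₁ * w‖ = ‖p₂ + p₃ * w‖ ↔ (B * conj w).re = A / 2) := by
    intro w hw
    rw [← sq_eq_sq₀ (norm_nonneg _) (norm_nonneg _), ← sub_eq_zero,
      sq_norm_add_mul_sub_sq_norm_add_mul p₀ p₁ p₂ p₃ hw]
    constructor <;> intro h <;> linarith
  calc (∃ w : ℂ, ‖w‖ = 1 ∧ ‖p₀ + p₁ * w‖ = ‖p₂ + p₃ * w‖)
      ↔ ∃ u : ℂ, ‖u‖ = 1 ∧ (B * u).re = A / 2 := by
        constructor
        · rintro ⟨w, hw, h⟩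
          exact ⟨conj w, by rwa [norm_conj], (hnorms w hw).mp h⟩
        · rintro ⟨u, hu, h⟩
          have hu' : ‖conj u‖ = 1 := by rwa [norm_conj]
          exact ⟨conj u, hu', (hnorms _ hu').mpr (by rwa [conj_conj])⟩
    _ ↔ |A / 2| ≤ ‖B‖ := exists_norm_eq_one_re_mul_eq_iff B (A / 2)
    _ ↔ A ^ 2 ≤ 4 * ‖B‖ ^ 2 := by
        rw [abs_div, abs_two, div_le_iff₀ two_pos, ← sq_le_sq₀ (abs_nonneg A) (by positivity),
          sq_abs, mul_comm, mul_pow]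
        norm_num

theorem stmt_6 (p₀ p₁ p₂ p₃ : ℂ) (ω : ℝ) (hω : 0 < ω) :
    (∃ τ₁ τ₂ : ℝ, 0 ≤ τ₁ ∧ 0 ≤ τ₂ ∧
        p₀ + p₁ * Complex.exp (-(I * ω * τ₁))
          + p₂ * Complex.exp (-(I * ω * τ₂))
          + p₃ * Complex.exp (-(I * ω * (τ₁ + τ₂))) = 0)
      ↔ (‖p₀‖ ^ 2 + ‖p₁‖ ^ 2
          - ‖p₂‖ ^ 2 - ‖p₃‖ ^ 2) ^ 2
        ≤ 4 * ‖p₂ * (starRingEnd ℂ) p₃ - p₀ * (starRingEnd ℂ) p₁‖ ^ 2 := by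
  have hcircle := exists_nonneg_exp_neg_I_mul_eq_iff hω
  have hequation : ∀ τ₁ τ₂ : ℝ,
      p₀ + p₁ * exp (-(I * ω * τ₁)) + p₂ * exp (-(I * ω * τ₂))
          + p₃ * exp (-(I * ω * (τ₁ + τ₂)))
        = (p₀ + p₁ * exp (-(I * ω * τ₁)))
          + exp (-(I * ω * τ₂)) * (p₂ + p₃ * exp (-(I * ω * τ₁))) := by
    intro τ₁ τ₂
    rw [mul_add, neg_add, exp_add]
    ring
  rw [← exists_norm_eq_one_norm_add_mul_eq_iff]
  simp only [hequation, ← exists_norm_eq_one_add_mul_eq_zero_iff]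
  constructor
  · rintro ⟨τ₁, τ₂, hτ₁, hτ₂, h⟩
    exact ⟨_, (hcircle _).mp ⟨τ₁, hτ₁, rfl⟩, _, (hcircle _).mp ⟨τ₂, hτ₂, rfl⟩, h⟩
  · rintro ⟨w, hw, v, hv, h⟩
    obtain ⟨τ₁, hτ₁, rfl⟩ := (hcircle w).mpr hw
    obtain ⟨τ₂, hτ₂, rfl⟩ := (hcircle v).mpr hv
    exact ⟨τ₁, τ₂, hτ₁, hτ₂, h⟩
end

section
/- Let p₀, p₁, p₂, p₃ ∈ ℂ with S := p₂·conj(p₃) − p₀·conj(p₁) ≠ 0, let θ₁ ∈ [0, π], let E₁ = e^{−i(θ₁ − arg S)}, and let E₂ ∈ ℂ with |E₂| = 1. Assume the characteristic equation p₀ + p₁E₁ + p₂E₂ + p₃E₁E₂ = 0 holds. Then Im( conj(p₁E₁ + p₃E₁E₂) · (p₂E₂ + p₃E₁E₂) ) = |S| sin θ₁. In particular this quantity is positive whenever θ₁ ∈ (0, π). -/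
/-!
On the unit circle `conj E = E⁻¹`, so multiplying the characteristic equation by `conj (p₁ E₁)`
turns `conj (p₁ E₁ + p₃ E₁ E₂) * (p₂ E₂ + p₃ E₁ E₂)` into `conj E₁ * S` plus the real number
`‖p₃‖² - ‖p₁‖²`. With `E₁ = exp (-i (θ₁ - arg S))` and `S = ‖S‖ exp (i arg S)` the first term is
`‖S‖ exp (i θ₁)`, whose imaginary part is `‖S‖ sin θ₁`.
-/

open Complex ComplexConjugate

lemma mul_conj_eq_one_of_norm_eq_one {z : ℂ} (hz : ‖z‖ = 1) : z * conj z = 1 := by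
  rw [mul_conj', hz]
  norm_num

lemma conj_mul_eq_of_char_eq_zero (p₀ p₁ p₂ p₃ E₁ E₂ : ℂ) (hE₁ : ‖E₁‖ = 1) (hE₂ : ‖E₂‖ = 1)
    (hchar : p₀ + p₁ * E₁ + p₂ * E₂ + p₃ * E₁ * E₂ = 0) :
    conj (p₁ * E₁ + p₃ * E₁ * E₂) * (p₂ * E₂ + p₃ * E₁ * E₂)
      = conj E₁ * (p₂ * conj p₃ - p₀ * conj p₁) + ((‖p₃‖ ^ 2 - ‖p₁‖ ^ 2 : ℝ) : ℂ) := by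
  have h₁ := mul_conj_eq_one_of_norm_eq_one hE₁
  have h₂ := mul_conj_eq_one_of_norm_eq_one hE₂
  simp only [map_add, map_mul]
  push_cast
  rw [← mul_conj', ← mul_conj']
  linear_combination (conj p₁ * conj E₁) * hchar
    + (p₃ * conj p₃ * E₂ * conj E₂ - p₁ * conj p₁) * h₁
    + (conj p₃ * conj E₁ * p₂ + p₃ * conj p₃) * h₂

lemma norm_exp_neg_I_mul_sub_arg (S : ℂ) (θ : ℝ) : ‖exp (-(I * (θ - arg S)))‖ = 1 := by
  rw [norm_exp]
  simp

lemma conj_exp_neg_I_mul_sub_arg_mul (S : ℂ) (θ : ℝ) :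
    conj (exp (-(I * (θ - arg S)))) * S = ‖S‖ * exp (θ * I) := by
  rw [← exp_conj]
  nth_rw 2 [← norm_mul_exp_arg_mul_I S]
  rw [mul_left_comm, ← exp_add]
  congr 2
  simp only [map_neg, map_mul, map_sub, conj_I, conj_ofReal]
  ring

theorem stmt_13_general
    (p₀ p₁ p₂ p₃ S : ℂ)
    (hS : S = p₂ * (starRingEnd ℂ) p₃ - p₀ * (starRingEnd ℂ) p₁)
    (hS0 : S ≠ 0)
    (θ₁ : ℝ)
    (E₁ E₂ : ℂ)
    (hE₁ : E₁ = Complex.exp (-(I * (θ₁ - Complex.arg S))))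
    (hE₂ : ‖E₂‖ = 1)
    (hchar : p₀ + p₁ * E₁ + p₂ * E₂ + p₃ * E₁ * E₂ = 0) :
    ((starRingEnd ℂ) (p₁ * E₁ + p₃ * E₁ * E₂) * (p₂ * E₂ + p₃ * E₁ * E₂)).im
      = ‖S‖ * Real.sin θ₁ ∧
    (θ₁ ∈ Set.Ioo 0 Real.pi →
      0 < ((starRingEnd ℂ) (p₁ * E₁ + p₃ * E₁ * E₂) * (p₂ * E₂ + p₃ * E₁ * E₂)).im) := by
  have hE₁_norm : ‖E₁‖ = 1 := hE₁ ▸ norm_exp_neg_I_mul_sub_arg S θ₁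
  have him : ((starRingEnd ℂ) (p₁ * E₁ + p₃ * E₁ * E₂) * (p₂ * E₂ + p₃ * E₁ * E₂)).im
      = ‖S‖ * Real.sin θ₁ := by
    rw [conj_mul_eq_of_char_eq_zero p₀ p₁ p₂ p₃ E₁ E₂ hE₁_norm hE₂ hchar, ← hS, hE₁,
      conj_exp_neg_I_mul_sub_arg_mul, add_im, ofReal_im, add_zero, im_ofReal_mul,
      exp_ofReal_mul_I_im]
  refine ⟨him, fun hθ => ?_⟩
  rw [him]
  exact mul_pos (norm_pos_iff.mpr hS0) (Real.sin_pos_of_pos_of_lt_pi hθ.1 hθ.2)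

theorem stmt_13
    (p₀ p₁ p₂ p₃ S : ℂ)
    (hS : S = p₂ * (starRingEnd ℂ) p₃ - p₀ * (starRingEnd ℂ) p₁)
    (hS0 : S ≠ 0)
    (θ₁ : ℝ) (hθ₁ : θ₁ ∈ Set.Icc 0 Real.pi)
    (E₁ E₂ : ℂ)
    (hE₁ : E₁ = Complex.exp (-(I * (θ₁ - Complex.arg S))))
    (hE₂ : ‖E₂‖ = 1)
    (hchar : p₀ + p₁ * E₁ + p₂ * E₂ + p₃ * E₁ * E₂ = 0) :
    ((starRingEnd ℂ) (p₁ * E₁ + p₃ * E₁ * E₂) * (p₂ * E₂ + p₃ * E₁ * E₂)).im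
      = ‖S‖ * Real.sin θ₁ ∧
    (θ₁ ∈ Set.Ioo 0 Real.pi →
      0 < ((starRingEnd ℂ) (p₁ * E₁ + p₃ * E₁ * E₂) * (p₂ * E₂ + p₃ * E₁ * E₂)).im) :=
  stmt_13_general p₀ p₁ p₂ p₃ S hS hS0 θ₁ E₁ E₂ hE₁ hE₂ hchar
end

section
/- Let r₁, r₂, a, K, γ, d₁, d₂, l > 0 be real numbers, m ∈ [0,1), n ∈ ℕ, and u* = K r₁/(r₁ + a K γ (1−m)²). If Fₙ(ω) > 0 for all ω > 0, then for all τ₁ ≥ 0, τ₂ ≥ 0 and all ω > 0, Dₙ(iω; τ₁, τ₂) ≠ 0; i.e. the characteristic equation of the n-th mode has no purely imaginary root iω with ω > 0 for any nonnegative delays, so no stability switching curves exist for that mode. -/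
/-!
At a root `iω` put `zⱼ = exp (-iωτⱼ)`, which are unimodular. The equation reads
`P₀ + P₁ z₁ = -(P₂ + P₃ z₁) z₂`, so `|P₀ + P₁ z₁| = |P₂ + P₃ z₁|`; expanding both squares gives
`A = 2 Re (C z̄₁)` with `A = |P₀|² + |P₁|² - |P₂|² - |P₃|²` and `C = P₂ P̄₃ - P₀ P̄₁`.
Hence `A² ≤ 4 |C|²`, i.e. `F ω ≤ 0`, contradicting `F ω > 0`.
-/

open Complex ComplexConjugate

namespace Complex

theorem sq_norm_add_mul_of_norm_eq_one (p q : ℂ) {z : ℂ} (hz : ‖z‖ = 1) :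
    ‖p + q * z‖ ^ 2 = ‖p‖ ^ 2 + ‖q‖ ^ 2 + 2 * (p * conj q * conj z).re := by
  have hz' : normSq z = 1 := by rw [← Complex.sq_norm, hz, one_pow]
  simp only [Complex.sq_norm, normSq_add, hz', mul_one, map_mul, mul_assoc]

theorem norm_exp_neg_I_mul_ofReal_mul (ω τ : ℝ) : ‖exp (-(I * ω) * τ)‖ = 1 := by
  rw [show -(I * ω) * τ = ((-(ω * τ) : ℝ) : ℂ) * I by push_cast; ring]
  exact norm_exp_ofReal_mul_I _

end Complex

theorem sq_le_four_mul_sq_norm_of_eq_zero_of_norm_eq_one {p₀ p₁ p₂ p₃ z₁ z₂ : ℂ}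
    (hz₁ : ‖z₁‖ = 1) (hz₂ : ‖z₂‖ = 1)
    (h : p₀ + p₁ * z₁ + p₂ * z₂ + p₃ * (z₁ * z₂) = 0) :
    (‖p₀‖ ^ 2 + ‖p₁‖ ^ 2 - ‖p₂‖ ^ 2 - ‖p₃‖ ^ 2) ^ 2
      ≤ 4 * ‖p₂ * conj p₃ - p₀ * conj p₁‖ ^ 2 := by
  set C := p₂ * conj p₃ - p₀ * conj p₁
  have hnorm : ‖p₀ + p₁ * z₁‖ = ‖p₂ + p₃ * z₁‖ := by
    rw [show p₀ + p₁ * z₁ = -((p₂ + p₃ * z₁) * z₂) by linear_combination h,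
      norm_neg, norm_mul, hz₂, mul_one]
  have hA : ‖p₀‖ ^ 2 + ‖p₁‖ ^ 2 - ‖p₂‖ ^ 2 - ‖p₃‖ ^ 2 = 2 * (C * conj z₁).re := by
    have := congrArg (· ^ 2) hnorm
    simp only [sq_norm_add_mul_of_norm_eq_one _ _ hz₁] at this
    simp only [C, sub_mul, sub_re]
    linarith
  have hre : |2 * (C * conj z₁).re| ≤ 2 * ‖C‖ := by
    rw [abs_mul, abs_two]
    gcongr
    simpa [norm_mul, hz₁] using abs_re_le_norm (C * conj z₁)
  rw [hA]
  calc (2 * (C * conj z₁).re) ^ 2 = |2 * (C * conj z₁).re| ^ 2 := (sq_abs _).symm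
    _ ≤ (2 * ‖C‖) ^ 2 := by gcongr
    _ = 4 * ‖C‖ ^ 2 := by ring

theorem stmt_14_general
    (P₀ P₁ P₂ P₃ : ℂ → ℂ)
    (Dchar : ℂ → ℝ → ℝ → ℂ)
    (hD : ∀ lam τ₁ τ₂, Dchar lam τ₁ τ₂ =
      P₀ lam + P₁ lam * Complex.exp (-lam * τ₁) + P₂ lam * Complex.exp (-lam * τ₂)
        + P₃ lam * Complex.exp (-lam * (τ₁ + τ₂)))
    (F : ℝ → ℝ)
    (hF : ∀ ω : ℝ, F ω =
      (‖P₀ (I * ω)‖ ^ 2 + ‖P₁ (I * ω)‖ ^ 2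
        - ‖P₂ (I * ω)‖ ^ 2 - ‖P₃ (I * ω)‖ ^ 2) ^ 2
      - 4 * ‖P₂ (I * ω) * (starRingEnd ℂ) (P₃ (I * ω))
          - P₀ (I * ω) * (starRingEnd ℂ) (P₁ (I * ω))‖ ^ 2)
    (hFpos : ∀ ω : ℝ, 0 < ω → 0 < F ω) :
    ∀ τ₁ τ₂ ω : ℝ, 0 ≤ τ₁ → 0 ≤ τ₂ → 0 < ω → Dchar (I * ω) τ₁ τ₂ ≠ 0 := by
  intro τ₁ τ₂ ω _ _ hω hzero
  have hsum := hD (I * ω) τ₁ τ₂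
  rw [hzero, mul_add, exp_add] at hsum
  have hle := sq_le_four_mul_sq_norm_of_eq_zero_of_norm_eq_one
    (norm_exp_neg_I_mul_ofReal_mul ω τ₁) (norm_exp_neg_I_mul_ofReal_mul ω τ₂) hsum.symm
  linarith [hF ω, hFpos ω hω]

theorem stmt_14
    (r₁ r₂ a K γ d₁ d₂ l : ℝ) (m : ℝ) (n : ℕ)
    (hr₁ : 0 < r₁) (hr₂ : 0 < r₂) (ha : 0 < a) (hK : 0 < K) (hγ : 0 < γ)
    (hd₁ : 0 < d₁) (hd₂ : 0 < d₂) (hl : 0 < l)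
    (hm0 : 0 ≤ m) (hm1 : m < 1)
    (ustar : ℝ) (hustar : ustar = K * r₁ / (r₁ + a * K * γ * (1 - m) ^ 2))
    (P₀ P₁ P₂ P₃ : ℂ → ℂ)
    (hP₀ : ∀ lam, P₀ lam = (lam + d₁ * n ^ 2 / l ^ 2) * (lam + d₂ * n ^ 2 / l ^ 2))
    (hP₁ : ∀ lam, P₁ lam = (r₁ / K) * ustar * (lam + d₂ * n ^ 2 / l ^ 2))
    (hP₂ : ∀ lam, P₂ lam = r₂ * (lam + d₁ * n ^ 2 / l ^ 2)
        + a * (1 - m) ^ 2 * γ * r₂ * ustar)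
    (hP₃ : ∀ lam, P₃ lam = (r₁ / K) * ustar * r₂)
    (Dchar : ℂ → ℝ → ℝ → ℂ)
    (hD : ∀ lam τ₁ τ₂, Dchar lam τ₁ τ₂ =
      P₀ lam + P₁ lam * Complex.exp (-lam * τ₁) + P₂ lam * Complex.exp (-lam * τ₂)
        + P₃ lam * Complex.exp (-lam * (τ₁ + τ₂)))
    (F : ℝ → ℝ)
    (hF : ∀ ω : ℝ, F ω =
      (‖P₀ (I * ω)‖ ^ 2 + ‖P₁ (I * ω)‖ ^ 2
        - ‖P₂ (I * ω)‖ ^ 2 - ‖P₃ (I * ω)‖ ^ 2) ^ 2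
      - 4 * ‖P₂ (I * ω) * (starRingEnd ℂ) (P₃ (I * ω))
          - P₀ (I * ω) * (starRingEnd ℂ) (P₁ (I * ω))‖ ^ 2)
    (hFpos : ∀ ω : ℝ, 0 < ω → 0 < F ω) :
    ∀ τ₁ τ₂ ω : ℝ, 0 ≤ τ₁ → 0 ≤ τ₂ → 0 < ω → Dchar (I * ω) τ₁ τ₂ ≠ 0 :=
  stmt_14_general P₀ P₁ P₂ P₃ Dchar hD F hF hFpos
end
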